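/- arXiv:math/0002216 — 6 statements merged into one kernel-verified Lean document; each statement's English description precedes it below -/
import Mathlib

section
/- Let C be a strict globular ω-category. The following are equivalent: (i) the operations *ᵢ, sᵢ, tᵢ for i ≥ 1 restrict to the set PC of morphisms of C of dimension ≥ 1, making PC (with indices shifted down by one) a strict globular ω-category; (ii) for every morphism x of dimension ≥ 1, both s₁x and t₁x are 1-dimensional. -/
/-- A strict globular ω-category: a set `A` with a family of compositions,
source and target maps `(*ₙ, sₙ, tₙ)` satisfying the 1-category axioms in each
degree, the globular axioms, the interchange law, the compatibility of
sources/targets with compositions in different degrees, and finiteness of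
dimension.  `comp n x y` is only meaningful when `tgt n x = src n y`. -/
structure OmegaCat where
  A : Type
  comp : ℕ → A → A → A
  src : ℕ → A → A
  tgt : ℕ → A → A
  src_comp : ∀ n x y, tgt n x = src n y → src n (comp n x y) = src n x
  tgt_comp : ∀ n x y, tgt n x = src n y → tgt n (comp n x y) = tgt n y
  comp_src_unit : ∀ n x, comp n (src n x) x = x
  comp_tgt_unit : ∀ n x, comp n x (tgt n x) = x
  comp_assoc : ∀ n x y z, tgt n x = src n y → tgt n y = src n z →
    comp n (comp n x y) z = comp n x (comp n y z)
  src_src_le : ∀ i j, j ≤ i → ∀ x, src i (src j x) = src j x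
  tgt_src_le : ∀ i j, j ≤ i → ∀ x, tgt i (src j x) = src j x
  src_tgt_le : ∀ i j, j ≤ i → ∀ x, src i (tgt j x) = tgt j x
  tgt_tgt_le : ∀ i j, j ≤ i → ∀ x, tgt i (tgt j x) = tgt j x
  src_src_lt : ∀ i j, i < j → ∀ x, src i (src j x) = src i x
  src_tgt_lt : ∀ i j, i < j → ∀ x, src i (tgt j x) = src i x
  tgt_src_lt : ∀ i j, i < j → ∀ x, tgt i (src j x) = tgt i x
  tgt_tgt_lt : ∀ i j, i < j → ∀ x, tgt i (tgt j x) = tgt i x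
  interchange : ∀ p q, p < q → ∀ x y z t,
    tgt p x = src p y → tgt p z = src p t → tgt q x = src q z → tgt q y = src q t →
    comp q (comp p x y) (comp p z t) = comp p (comp q x z) (comp q y t)
  src_comp_ne : ∀ i j, i ≠ j → ∀ x y, tgt j x = src j y →
    src i (comp j x y) = comp j (src i x) (src i y)
  tgt_comp_ne : ∀ i j, i ≠ j → ∀ x y, tgt j x = src j y →
    tgt i (comp j x y) = comp j (tgt i x) (tgt i y)
  finiteDim : ∀ x, ∃ n, src n x = x ∧ tgt n x = x

namespace OmegaCat

variable (C : OmegaCat)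

/-- `x` has dimension at most `n`. -/
def dimLE (n : ℕ) (x : C.A) : Prop := C.src n x = x ∧ C.tgt n x = x

/-- `x` has dimension at least 1 (strictly positive dimension). -/
def PosDim (x : C.A) : Prop := ¬ C.dimLE 0 x

/-- `x` is exactly 1-dimensional. -/
def OneDim (x : C.A) : Prop := C.dimLE 1 x ∧ ¬ C.dimLE 0 x

/-- `s₁` and `t₁` are non-contracting: for `x` of dimension ≥ 1, `s₁ x` and
`t₁ x` are 1-dimensional. -/
def NonContracting : Prop :=
  ∀ x : C.A, C.PosDim x → C.OneDim (C.src 1 x) ∧ C.OneDim (C.tgt 1 x)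

end OmegaCat

private lemma src1_of_dim0 (C : OmegaCat) {y : C.A} (h : C.dimLE 0 y) :
    C.src 1 y = y := by
  conv_lhs => rw [← h.1]
  rw [C.src_src_le 1 0 (by omega), h.1]

private lemma tgt1_of_dim0 (C : OmegaCat) {y : C.A} (h : C.dimLE 0 y) :
    C.tgt 1 y = y := by
  conv_lhs => rw [← h.1]
  rw [C.tgt_src_le 1 0 (by omega), h.1]

/-- (i) the operations `*ᵢ, sᵢ, tᵢ` for `i ≥ 1` are internal to the set `PC`
of morphisms of strictly positive dimension (making `PC`, with indices
shifted down by one, a strict globular ω-category) if and only if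
(ii) for every morphism `x` of dimension ≥ 1 both `s₁ x` and `t₁ x` are
1-dimensional. -/
theorem stmt2 (C : OmegaCat) :
    ((∀ i, 1 ≤ i → ∀ x : C.A, C.PosDim x →
        C.PosDim (C.src i x) ∧ C.PosDim (C.tgt i x)) ∧
     (∀ i, 1 ≤ i → ∀ x y : C.A, C.PosDim x → C.PosDim y →
        C.tgt i x = C.src i y → C.PosDim (C.comp i x y)))
    ↔ (∀ x : C.A, C.PosDim x → C.OneDim (C.src 1 x) ∧ C.OneDim (C.tgt 1 x)) := by
  constructor
  · rintro ⟨h1, _⟩ x hx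
    obtain ⟨hs, ht⟩ := h1 1 le_rfl x hx
    exact ⟨⟨⟨C.src_src_le 1 1 le_rfl x, C.tgt_src_le 1 1 le_rfl x⟩, hs⟩,
           ⟨⟨C.src_tgt_le 1 1 le_rfl x, C.tgt_tgt_le 1 1 le_rfl x⟩, ht⟩⟩
  · intro hnc
    constructor
    · intro i hi x hx
      constructor
      · intro hd
        rcases eq_or_lt_of_le hi with h1 | h1
        · exact (hnc x hx).1.2 (h1 ▸ hd)
        · have hz : C.src 1 (C.src i x) = C.src i x := src1_of_dim0 C hd
          have he : C.src 1 x = C.src i x := by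
            rw [← C.src_src_lt 1 i h1 x, hz]
          exact (hnc x hx).1.2 (he ▸ hd)
      · intro hd
        rcases eq_or_lt_of_le hi with h1 | h1
        · exact (hnc x hx).2.2 (h1 ▸ hd)
        · have hz : C.tgt 1 (C.tgt i x) = C.tgt i x := tgt1_of_dim0 C hd
          have he : C.tgt 1 x = C.tgt i x := by
            rw [← C.tgt_tgt_lt 1 i h1 x, hz]
          exact (hnc x hx).2.2 (he ▸ hd)
    · intro i hi x y hx hy hxy hd
      have hz1 : C.src 1 (C.comp i x y) = C.comp i x y := src1_of_dim0 C hd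
      rcases eq_or_lt_of_le hi with h1 | h1
      · have he : C.src 1 (C.comp i x y) = C.src 1 x := by
          subst h1; exact C.src_comp 1 x y hxy
        exact (hnc x hx).1.2 (by rw [he] at hz1; rw [hz1]; exact hd)
      · have h1i : (1 : ℕ) ≠ i := ne_of_lt h1
        have hsc : C.src 1 (C.comp i x y) = C.comp i (C.src 1 x) (C.src 1 y) :=
          C.src_comp_ne 1 i h1i x y hxy
        have hxy1 : C.src 1 x = C.src 1 y := by
          have h := congrArg (C.src 1) hxy
          rwa [C.src_tgt_lt 1 i h1, C.src_src_lt 1 i h1] at h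
        have hcy : C.comp i (C.src 1 x) (C.src 1 y) = C.src 1 y := by
          rw [hxy1]
          nth_rewrite 1 [← C.src_src_le i 1 hi y]
          exact C.comp_src_unit i (C.src 1 y)
        have : C.src 1 y = C.comp i x y := by rw [← hcy, ← hsc, hz1]
        exact (hnc y hy).1.2 (this ▸ hd)
end

section
/- Let C be a strict globular ω-category and let x : Δⁿ → PC be an ω-functor from the free ω-category on the n-simplex to the path ω-category of C (C non-contracting). Then the map sending each face (σ₀…σᵣ) of Δⁿ to s₀(x((σ₀…σᵣ))) ∈ C₀ is constant, and similarly the map (σ₀…σᵣ) ↦ t₀(x((σ₀…σᵣ))) is constant. -/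
/-- A face of the `n`-simplex: a nonempty strictly increasing sequence in
`{0, …, n}`, encoded as a nonempty subset of `Fin (n+1)`. -/
def SimplexFace (n : ℕ) : Type := {s : Finset (Fin (n+1)) // s.Nonempty}

/-- The face obtained from `σ` by deleting the element in position `i`
(positions in the increasing enumeration of `σ`, counted from 0). -/
def delPos {n : ℕ} (σ : Finset (Fin (n+1))) (i : ℕ) : Finset (Fin (n+1)) :=
  ((σ.sort (· ≤ ·)).eraseIdx i).toFinset

/-- `Gen C S x`: `x` is an iterated composite of elements of `S` in the
ω-category `C`. -/
inductive Gen (C : OmegaCat) (S : Set C.A) : C.A → Prop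
  | of {x : C.A} : x ∈ S → Gen C S x
  | cmp {p : ℕ} {x y : C.A} : Gen C S x → Gen C S y → C.tgt p x = C.src p y →
      Gen C S (C.comp p x y)

/-- A presentation of Street's free ω-category `Δⁿ` generated by the faces of
the `n`-simplex: an ω-category `D` with an injection `R` of the faces, in which
every element is a composite of faces, `R σ` has the dimension of `σ`, and the
`(p-1)`-source (resp. target) of a `p`-dimensional face `R σ` is a composite of
the subfaces of the faces obtained from `σ` by removing one element in odd
(resp. even) position. -/
structure SimplexStruct (n : ℕ) where
  D : OmegaCat
  R : SimplexFace n → D.A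
  inj : Function.Injective R
  dim_le : ∀ σ : SimplexFace n, D.dimLE (σ.1.card - 1) (R σ)
  dim_exact : ∀ σ : SimplexFace n, 2 ≤ σ.1.card → ¬ D.dimLE (σ.1.card - 2) (R σ)
  src_boundary : ∀ σ : SimplexFace n, 2 ≤ σ.1.card →
    Gen D {y | ∃ τ : SimplexFace n,
        (∃ i, i < σ.1.card ∧ Odd i ∧ τ.1 ⊆ delPos σ.1 i) ∧ y = R τ}
      (D.src (σ.1.card - 2) (R σ))
  tgt_boundary : ∀ σ : SimplexFace n, 2 ≤ σ.1.card →
    Gen D {y | ∃ τ : SimplexFace n,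
        (∃ i, i < σ.1.card ∧ Even i ∧ τ.1 ⊆ delPos σ.1 i) ∧ y = R τ}
      (D.tgt (σ.1.card - 2) (R σ))
  generates : ∀ x : D.A, Gen D (Set.range R) x

/-- An ω-functor from `D` to the path ω-category `PC` of `C`: a map landing in
the morphisms of strictly positive dimension, sending the `m`-source,
`m`-target and `*ₘ`-composition of `D` to the `(m+1)`-source, `(m+1)`-target
and `*ₘ₊₁`-composition of `C`. -/
structure ToPathFunctor (D C : OmegaCat) where
  f : D.A → C.A
  pos : ∀ d, C.PosDim (f d)
  map_src : ∀ m d, f (D.src m d) = C.src (m+1) (f d)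
  map_tgt : ∀ m d, f (D.tgt m d) = C.tgt (m+1) (f d)
  map_comp : ∀ m a b, D.tgt m a = D.src m b →
    f (D.comp m a b) = C.comp (m+1) (f a) (f b)

section Aux

/-- Any element generated by `T` has the same `h`-value as some element of `T`,
provided `h` is invariant under left factors of compositions. -/
theorem gen_eq_aux {D : OmegaCat} {β : Type} {h : D.A → β}
    (hcomp : ∀ p a b, D.tgt p a = D.src p b → h (D.comp p a b) = h a)
    {T : Set D.A} : ∀ {d}, Gen D T d → ∃ s ∈ T, h d = h s := by
  intro d hd
  induction hd with
  | of hx => exact ⟨_, hx, rfl⟩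
  | cmp ha hb hst iha ihb =>
      obtain ⟨s, hs, he⟩ := iha
      exact ⟨s, hs, (hcomp _ _ _ hst).trans he⟩

theorem delPos_card_lt {n : ℕ} {σ : Finset (Fin (n+1))} {i : ℕ}
    (hi : i < σ.card) : (delPos σ i).card < σ.card := by
  have hlen : (σ.sort (· ≤ ·)).length = σ.card := Finset.length_sort _
  have h1 : ((σ.sort (· ≤ ·)).eraseIdx i).length = σ.card - 1 := by
    rw [List.length_eraseIdx_of_lt (by omega), hlen]
  have h2 : (delPos σ i).card ≤ σ.card - 1 := by
    have := List.toFinset_card_le ((σ.sort (· ≤ ·)).eraseIdx i)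
    rw [h1] at this
    exact this
  omega

/-- The vertex face. -/
def vface {n : ℕ} (v : Fin (n+1)) : SimplexFace n :=
  ⟨{v}, Finset.singleton_nonempty v⟩

theorem sort_pair {n : ℕ} {i j : Fin (n+1)} (hij : i < j) :
    ({i, j} : Finset (Fin (n+1))).sort (· ≤ ·) = [i, j] := by
  have : ({i, j} : Finset (Fin (n+1))) = insert i {j} := rfl
  rw [this, Finset.sort_insert (r := (· ≤ ·))
      (by intro b hb; simp at hb; simp [hb, hij.le])
      (by simp [hij.ne]), Finset.sort_singleton]

theorem delPos_pair_one {n : ℕ} {i j : Fin (n+1)} (hij : i < j) :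
    delPos ({i, j} : Finset (Fin (n+1))) 1 = {i} := by
  rw [delPos, sort_pair hij]
  rfl

theorem delPos_pair_zero {n : ℕ} {i j : Fin (n+1)} (hij : i < j) :
    delPos ({i, j} : Finset (Fin (n+1))) 0 = {j} := by
  rw [delPos, sort_pair hij]
  rfl

/-- Abstract constancy lemma: any map on `Δⁿ` that is invariant under sources,
targets, and compositions (taking the value of the left factor) is constant on
faces. -/
theorem const_on_faces {n : ℕ} (S : SimplexStruct n) {β : Type} (h : S.D.A → β)
    (hcomp : ∀ p a b, S.D.tgt p a = S.D.src p b → h (S.D.comp p a b) = h a)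
    (hsrc : ∀ m d, h (S.D.src m d) = h d)
    (htgt : ∀ m d, h (S.D.tgt m d) = h d) :
    ∀ σ τ : SimplexFace n, h (S.R σ) = h (S.R τ) := by
  -- Step 1: every face has the `h`-value of some vertex.
  have key : ∀ c (σ : SimplexFace n), σ.1.card ≤ c →
      ∃ v : Fin (n+1), h (S.R σ) = h (S.R (vface v)) := by
    intro c
    induction c with
    | zero =>
        intro σ h0
        have := Finset.card_pos.mpr σ.2
        omega
    | succ c ih =>
        intro σ hc
        rcases eq_or_lt_of_le (show 1 ≤ σ.1.card from Finset.card_pos.mpr σ.2) with h1 | h2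
        · -- card = 1: σ is a vertex
          obtain ⟨v, hv⟩ := Finset.card_eq_one.mp h1.symm
          refine ⟨v, ?_⟩
          have : σ = vface v := Subtype.ext hv
          rw [this]
        · -- card ≥ 2: descend via the source boundary
          have h2' : 2 ≤ σ.1.card := h2
          obtain ⟨s, ⟨τ, ⟨i, hi, _, hsub⟩, rfl⟩, he⟩ :=
            gen_eq_aux hcomp (S.src_boundary σ h2')
          have hτ : τ.1.card < σ.1.card :=
            lt_of_le_of_lt (Finset.card_le_card hsub) (delPos_card_lt hi)
          obtain ⟨v, hv⟩ := ih τ (by omega)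
          refine ⟨v, ?_⟩
          calc h (S.R σ) = h (S.D.src (σ.1.card - 2) (S.R σ)) := (hsrc _ _).symm
            _ = h (S.R τ) := he
            _ = _ := hv
  -- Step 2: all vertices have the same `h`-value, via edges.
  have vert : ∀ v w : Fin (n+1), h (S.R (vface v)) = h (S.R (vface w)) := by
    have main : ∀ v w : Fin (n+1), v < w →
        h (S.R (vface v)) = h (S.R (vface w)) := by
      intro v w hvw
      set σ : SimplexFace n := ⟨{v, w}, Finset.insert_nonempty _ _⟩ with hσ
      have hcard : σ.1.card = 2 := Finset.card_pair hvw.ne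
      have h2 : 2 ≤ σ.1.card := le_of_eq hcard.symm
      -- source boundary: h (R σ) = h (R (vface v))
      have hs : h (S.R σ) = h (S.R (vface v)) := by
        obtain ⟨s, ⟨τ, ⟨i, hi, hodd, hsub⟩, rfl⟩, he⟩ :=
          gen_eq_aux hcomp (S.src_boundary σ h2)
        have hi1 : i = 1 := by
          obtain ⟨k, rfl⟩ := hodd
          rw [hcard] at hi
          omega
        subst hi1
        rw [delPos_pair_one hvw] at hsub
        have hτ : τ = vface v := by
          apply Subtype.ext
          rcases Finset.subset_singleton_iff.mp hsub with h0 | h0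
          · exact absurd h0 (Finset.nonempty_iff_ne_empty.mp τ.2)
          · exact h0
        rw [hτ] at he
        calc h (S.R σ) = h (S.D.src (σ.1.card - 2) (S.R σ)) := (hsrc _ _).symm
          _ = _ := he
      -- target boundary: h (R σ) = h (R (vface w))
      have ht : h (S.R σ) = h (S.R (vface w)) := by
        obtain ⟨s, ⟨τ, ⟨i, hi, heven, hsub⟩, rfl⟩, he⟩ :=
          gen_eq_aux hcomp (S.tgt_boundary σ h2)
        have hi0 : i = 0 := by
          obtain ⟨k, hk⟩ := heven
          rw [hcard] at hi
          omega
        subst hi0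
        rw [delPos_pair_zero hvw] at hsub
        have hτ : τ = vface w := by
          apply Subtype.ext
          rcases Finset.subset_singleton_iff.mp hsub with h0 | h0
          · exact absurd h0 (Finset.nonempty_iff_ne_empty.mp τ.2)
          · exact h0
        rw [hτ] at he
        calc h (S.R σ) = h (S.D.tgt (σ.1.card - 2) (S.R σ)) := (htgt _ _).symm
          _ = _ := he
      rw [← hs, ht]
    intro v w
    rcases lt_trichotomy v w with hlt | heq | hgt
    · exact main _ _ hlt
    · rw [heq]
    · exact (main _ _ hgt).symm
  intro σ τ
  obtain ⟨v, hv⟩ := key σ.1.card σ le_rfl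
  obtain ⟨w, hw⟩ := key τ.1.card τ le_rfl
  rw [hv, hw, vert v w]

end Aux

/-- Grading theorem: for a non-contracting ω-category `C` and an ω-functor
`x : Δⁿ → PC`, the maps `σ ↦ s₀(x(σ))` and `σ ↦ t₀(x(σ))` on the faces of the
`n`-simplex are constant. -/
theorem stmt4 (n : ℕ) (S : SimplexStruct n) (C : OmegaCat)
    (hC : C.NonContracting) (x : ToPathFunctor S.D C) :
    ∀ σ τ : SimplexFace n,
      C.src 0 (x.f (S.R σ)) = C.src 0 (x.f (S.R τ)) ∧
      C.tgt 0 (x.f (S.R σ)) = C.tgt 0 (x.f (S.R τ)) := by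
  have hsrcConst : ∀ σ τ : SimplexFace n,
      C.src 0 (x.f (S.R σ)) = C.src 0 (x.f (S.R τ)) := by
    apply const_on_faces S (fun d => C.src 0 (x.f d))
    · intro p a b hab
      have hab' : C.tgt (p+1) (x.f a) = C.src (p+1) (x.f b) := by
        rw [← x.map_tgt, ← x.map_src, hab]
      show C.src 0 (x.f (S.D.comp p a b)) = C.src 0 (x.f a)
      rw [x.map_comp p a b hab, C.src_comp_ne 0 (p+1) (by omega) _ _ hab']
      have h1 : C.src 0 (x.f b) = C.src 0 (x.f a) := by
        rw [← C.src_src_lt 0 (p+1) (by omega) (x.f b), ← hab',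
          C.src_tgt_lt 0 (p+1) (by omega)]
      rw [h1]
      calc C.comp (p+1) (C.src 0 (x.f a)) (C.src 0 (x.f a))
          = C.comp (p+1) (C.src 0 (x.f a)) (C.tgt (p+1) (C.src 0 (x.f a))) := by
            rw [C.tgt_src_le (p+1) 0 (by omega)]
        _ = C.src 0 (x.f a) := C.comp_tgt_unit _ _
    · intro m d
      show C.src 0 (x.f (S.D.src m d)) = C.src 0 (x.f d)
      rw [x.map_src, C.src_src_lt 0 (m+1) (by omega)]
    · intro m d
      show C.src 0 (x.f (S.D.tgt m d)) = C.src 0 (x.f d)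
      rw [x.map_tgt, C.src_tgt_lt 0 (m+1) (by omega)]
  have htgtConst : ∀ σ τ : SimplexFace n,
      C.tgt 0 (x.f (S.R σ)) = C.tgt 0 (x.f (S.R τ)) := by
    apply const_on_faces S (fun d => C.tgt 0 (x.f d))
    · intro p a b hab
      have hab' : C.tgt (p+1) (x.f a) = C.src (p+1) (x.f b) := by
        rw [← x.map_tgt, ← x.map_src, hab]
      show C.tgt 0 (x.f (S.D.comp p a b)) = C.tgt 0 (x.f a)
      rw [x.map_comp p a b hab, C.tgt_comp_ne 0 (p+1) (by omega) _ _ hab']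
      have h1 : C.tgt 0 (x.f b) = C.tgt 0 (x.f a) := by
        rw [← C.tgt_src_lt 0 (p+1) (by omega) (x.f b), ← hab',
          C.tgt_tgt_lt 0 (p+1) (by omega)]
      rw [h1]
      calc C.comp (p+1) (C.tgt 0 (x.f a)) (C.tgt 0 (x.f a))
          = C.comp (p+1) (C.src (p+1) (C.tgt 0 (x.f a))) (C.tgt 0 (x.f a)) := by
            rw [C.src_tgt_le (p+1) 0 (by omega)]
        _ = C.tgt 0 (x.f a) := C.comp_src_unit _ _
    · intro m d
      show C.tgt 0 (x.f (S.D.src m d)) = C.tgt 0 (x.f d)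
      rw [x.map_src, C.tgt_src_lt 0 (m+1) (by omega)]
    · intro m d
      show C.tgt 0 (x.f (S.D.tgt m d)) = C.tgt 0 (x.f d)
      rw [x.map_tgt, C.tgt_tgt_lt 0 (m+1) (by omega)]
  exact fun σ τ => ⟨hsrcConst σ τ, htgtConst σ τ⟩
end

section
/- Let C be a non-contracting strict globular ω-category, and let x, y : Δⁿ → PC be ω-functors with T(x) = S(y), where S(z) and T(z) denote the constant values of s₀∘z and t₀∘z respectively. Define (x*y)(σ) := x(σ) *₀ y(σ) for each face σ of Δⁿ. If the image of x*y lies in PC (i.e., every (x*y)(σ) has dimension ≥ 1 in C), then x*y is an ω-functor from Δⁿ to PC and ∂ᵢ(x*y) = (∂ᵢx)*(∂ᵢy) for all 0 ≤ i ≤ n. -/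
/-- An ω-functor between ω-categories. -/
structure OmegaFunctor (C D : OmegaCat) where
  f : C.A → D.A
  map_src : ∀ n x, f (C.src n x) = D.src n (f x)
  map_tgt : ∀ n x, f (C.tgt n x) = D.tgt n (f x)
  map_comp : ∀ n x y, C.tgt n x = C.src n y →
    f (C.comp n x y) = D.comp n (f x) (f y)

/-! The `*₀`-composite is computed in degree 0, while an ω-functor into `PC` only
involves sources, targets and compositions in degrees `m + 1 ≥ 1`. Sources and
targets in degree `m + 1` distribute over `*₀`, and `*ₘ₊₁` commutes with `*₀` by
the interchange law, so `σ ↦ x(σ) *₀ y(σ)` is again an ω-functor `Δⁿ → PC`. -/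

namespace ToPathFunctor

variable {D C : OmegaCat}

theorem tgt_succ_eq_src_succ (x : ToPathFunctor D C) {m : ℕ} {a b : D.A}
    (hab : D.tgt m a = D.src m b) : C.tgt (m + 1) (x.f a) = C.src (m + 1) (x.f b) := by
  rw [← x.map_tgt, ← x.map_src, hab]

def comp₀ (x y : ToPathFunctor D C) (hT : ∀ d, C.tgt 0 (x.f d) = C.src 0 (y.f d))
    (hpos : ∀ d, C.PosDim (C.comp 0 (x.f d) (y.f d))) : ToPathFunctor D C where
  f d := C.comp 0 (x.f d) (y.f d)
  pos := hpos
  map_src m d := by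
    rw [x.map_src, y.map_src, C.src_comp_ne _ _ m.succ_ne_zero _ _ (hT d)]
  map_tgt m d := by
    rw [x.map_tgt, y.map_tgt, C.tgt_comp_ne _ _ m.succ_ne_zero _ _ (hT d)]
  map_comp m a b hab := by
    rw [x.map_comp m a b hab, y.map_comp m a b hab,
      C.interchange 0 (m + 1) m.succ_pos _ _ _ _ (hT a) (hT b)
        (x.tgt_succ_eq_src_succ hab) (y.tgt_succ_eq_src_succ hab)]

end ToPathFunctor

theorem stmt9_general (n : ℕ) (S : SimplexStruct n) (C : OmegaCat)
    (x y : ToPathFunctor S.D C)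
    (hT : ∀ d d' : S.D.A, C.tgt 0 (x.f d) = C.src 0 (y.f d'))
    (hpos : ∀ d : S.D.A, C.PosDim (C.comp 0 (x.f d) (y.f d))) :
    ∃ Z : ToPathFunctor S.D C,
      (Z.f = fun d => C.comp 0 (x.f d) (y.f d)) ∧
      (∀ (m : ℕ) (S' : SimplexStruct m) (G : OmegaFunctor S'.D S.D)
          (d : S'.D.A),
        Z.f (G.f d) = C.comp 0 (x.f (G.f d)) (y.f (G.f d))) :=
  ⟨x.comp₀ y (fun d => hT d d) hpos, rfl, fun _ _ _ _ => rfl⟩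

/-- Pointwise `*₀`-composition of globular simplices: if `x, y : Δⁿ → PC` are
ω-functors with `T(x) = S(y)` and every `x(σ) *₀ y(σ)` has dimension ≥ 1, then
`x*y : σ ↦ x(σ) *₀ y(σ)` is again an ω-functor `Δⁿ → PC`, and it commutes with
the simplicial face maps: `∂ᵢ(x*y) = (∂ᵢx)*(∂ᵢy)`. -/
theorem stmt9 (n : ℕ) (S : SimplexStruct n) (C : OmegaCat)
    (hC : C.NonContracting) (x y : ToPathFunctor S.D C)
    (hT : ∀ d d' : S.D.A, C.tgt 0 (x.f d) = C.src 0 (y.f d'))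
    (hpos : ∀ d : S.D.A, C.PosDim (C.comp 0 (x.f d) (y.f d))) :
    ∃ Z : ToPathFunctor S.D C,
      (Z.f = fun d => C.comp 0 (x.f d) (y.f d)) ∧
      (∀ (m : ℕ) (S' : SimplexStruct m) (G : OmegaFunctor S'.D S.D)
          (d : S'.D.A),
        Z.f (G.f d) = C.comp 0 (x.f (G.f d)) (y.f (G.f d))) :=
  stmt9_general n S C x y hT hpos
end

section
/- Let F and G be regular cuts of ω-categories and f : F → G a morphism of cuts (a natural transformation of functors to augmented simplicial sets commuting with the evaluation maps). Then f commutes with the folding operators: Φ^G ∘ f = f ∘ Φ^F as natural transformations from F to G. -/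
/-- A non-contracting ω-category. -/
structure NCat where
  C : OmegaCat
  nc : C.NonContracting

/-- A non-contracting ω-functor: an ω-functor sending 1-dimensional morphisms
to 1-dimensional morphisms. -/
structure NCFunctor (C D : OmegaCat) where
  f : C.A → D.A
  map_src : ∀ n x, f (C.src n x) = D.src n (f x)
  map_tgt : ∀ n x, f (C.tgt n x) = D.tgt n (f x)
  map_comp : ∀ n x y, C.tgt n x = C.src n y →
    f (C.comp n x y) = D.comp n (f x) (f y)
  nc : ∀ x, C.OneDim x → D.OneDim (f x)

/-- `trⁿP(X)`: the morphisms of the path ω-category `PX` of dimension ≤ `n`,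
i.e. the morphisms of `X` of dimension ≥ 1 and ≤ `n+1`. -/
def trP (X : NCat) (n : ℕ) : Type :=
  {x : X.C.A // X.C.PosDim x ∧ X.C.dimLE (n+1) x}

/-- A regular simplicial cut of ω-categories: a functor `F` from
non-contracting ω-categories to simplicial sets, with natural evaluation maps
`ev : Fₙ → trⁿP` (here `face X n i` is `∂ᵢ : Fₙ₊₁ → Fₙ` and `degen X n i` is
`εᵢ : Fₙ → Fₙ₊₁`), satisfying the regularity axioms: `F₀ = tr⁰P` (via `ev`
being bijective in degree 0), `ev ∘ εᵢ = ev`, the unique-lifting property for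
natural maps `□ : tr^{n-1}P → F_{n-1}` with `ev∘□ = Id` along natural
transformations `μ : F_{n-1} → Fₙ`, and the axioms on the faces of the folding
operators.  The operators `□ₙ₊₁ = fold n : trⁿP → Fₙ` are the resulting
natural lifts, determined by `ev ∘ □ₙ = Id`, `□₁ = Id_{F₀}` and
`□ₙ₊₁ ∘ iₙ = εₙ₋₁ ∘ □ₙ`. -/
structure RegularCut where
  F : NCat → ℕ → Type
  map : ∀ {X Y : NCat}, NCFunctor X.C Y.C → ∀ n, F X n → F Y n
  face : ∀ (X : NCat) (n : ℕ), Fin (n+2) → F X (n+1) → F X n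
  degen : ∀ (X : NCat) (n : ℕ), Fin (n+1) → F X n → F X (n+1)
  face_face : ∀ (X : NCat) n (i : Fin (n+2)) (j : Fin (n+3))
      (h : (i:ℕ) < (j:ℕ)) (x : F X (n+2)),
    face X n i (face X (n+1) j x)
      = face X n ⟨(j:ℕ)-1, by have := j.isLt; omega⟩
          (face X (n+1) ⟨(i:ℕ), by have := i.isLt; omega⟩ x)
  degen_degen : ∀ (X : NCat) n (i : Fin (n+2)) (j : Fin (n+1))
      (h : (i:ℕ) ≤ (j:ℕ)) (x : F X n),
    degen X (n+1) i (degen X n j x)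
      = degen X (n+1) ⟨(j:ℕ)+1, by have := j.isLt; omega⟩
          (degen X n ⟨(i:ℕ), by have := j.isLt; omega⟩ x)
  face_degen_lt : ∀ (X : NCat) n (i : Fin (n+3)) (j : Fin (n+2))
      (h : (i:ℕ) < (j:ℕ)) (x : F X (n+1)),
    face X (n+1) i (degen X (n+1) j x)
      = degen X n ⟨(j:ℕ)-1, by have := j.isLt; omega⟩
          (face X n ⟨(i:ℕ), by have := j.isLt; omega⟩ x)
  face_degen_self : ∀ (X : NCat) n (i : Fin (n+3)) (j : Fin (n+2))
      (h : (i:ℕ) = (j:ℕ) ∨ (i:ℕ) = (j:ℕ)+1) (x : F X (n+1)),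
    face X (n+1) i (degen X (n+1) j x) = x
  face_degen_gt : ∀ (X : NCat) n (i : Fin (n+3)) (j : Fin (n+2))
      (h : (j:ℕ)+1 < (i:ℕ)) (x : F X (n+1)),
    face X (n+1) i (degen X (n+1) j x)
      = degen X n ⟨(j:ℕ), by have := i.isLt; omega⟩
          (face X n ⟨(i:ℕ)-1, by have := i.isLt; omega⟩ x)
  map_face : ∀ {X Y : NCat} (g : NCFunctor X.C Y.C) n (i : Fin (n+2))
      (x : F X (n+1)),
    map g n (face X n i x) = face Y n i (map g (n+1) x)
  map_degen : ∀ {X Y : NCat} (g : NCFunctor X.C Y.C) n (i : Fin (n+1))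
      (x : F X n),
    map g (n+1) (degen X n i x) = degen Y n i (map g n x)
  ev : ∀ (X : NCat) (n : ℕ), F X n → trP X n
  ev_map : ∀ {X Y : NCat} (g : NCFunctor X.C Y.C) n (x : F X n),
    (ev Y n (map g n x)).1 = g.f (ev X n x).1
  ev0_bij : ∀ X : NCat, Function.Bijective (ev X 0)
  ev_degen : ∀ (X : NCat) n (i : Fin (n+1)) (x : F X n),
    (ev X (n+1) (degen X n i x)).1 = (ev X n x).1
  fold : ∀ (X : NCat) (n : ℕ), trP X n → F X n
  fold_ev : ∀ (X : NCat) n (u : trP X n), ev X n (fold X n u) = u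
  fold_map : ∀ {X Y : NCat} (g : NCFunctor X.C Y.C) n (u : trP X n)
      (v : trP Y n), v.1 = g.f u.1 → map g n (fold X n u) = fold Y n v
  fold_succ : ∀ (X : NCat) n (u : trP X (n+1)) (u' : trP X n), u'.1 = u.1 →
    fold X (n+1) u = degen X n ⟨n, Nat.lt_succ_self n⟩ (fold X n u')
  lift_exists : ∀ (n : ℕ) (μ : ∀ X : NCat, F X n → F X (n+1))
      (sq : ∀ X : NCat, trP X n → F X n),
    (∀ {X Y : NCat} (g : NCFunctor X.C Y.C) (x : F X n),
        map g (n+1) (μ X x) = μ Y (map g n x)) →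
    (∀ {X Y : NCat} (g : NCFunctor X.C Y.C) (u : trP X n) (v : trP Y n),
        v.1 = g.f u.1 → map g n (sq X u) = sq Y v) →
    (∀ (X : NCat) (u : trP X n), ev X n (sq X u) = u) →
    ∃ L : ∀ X : NCat, trP X (n+1) → F X (n+1),
      (∀ {X Y : NCat} (g : NCFunctor X.C Y.C) (u : trP X (n+1))
          (v : trP Y (n+1)), v.1 = g.f u.1 → map g (n+1) (L X u) = L Y v) ∧
      (∀ (X : NCat) (u : trP X (n+1)), ev X (n+1) (L X u) = u) ∧
      (∀ (X : NCat) (u : trP X (n+1)) (u' : trP X n), u.1 = u'.1 →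
          L X u = μ X (sq X u'))
  lift_unique : ∀ (n : ℕ) (L L' : ∀ X : NCat, trP X (n+1) → F X (n+1)),
    (∀ {X Y : NCat} (g : NCFunctor X.C Y.C) (u : trP X (n+1))
        (v : trP Y (n+1)), v.1 = g.f u.1 → map g (n+1) (L X u) = L Y v) →
    (∀ {X Y : NCat} (g : NCFunctor X.C Y.C) (u : trP X (n+1))
        (v : trP Y (n+1)), v.1 = g.f u.1 → map g (n+1) (L' X u) = L' Y v) →
    (∀ (X : NCat) (u : trP X (n+1)), ev X (n+1) (L X u) = u) →
    (∀ (X : NCat) (u : trP X (n+1)), ev X (n+1) (L' X u) = u) →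
    (∀ (X : NCat) (u : trP X (n+1)) (u' : trP X n), u.1 = u'.1 →
        L X u = L' X u) →
    ∀ (X : NCat) (u : trP X (n+1)), L X u = L' X u
  fold_face_st : ∀ (X : NCat) (m : ℕ) (u : trP X (m+1)),
    ((ev X m (face X m ⟨m, by omega⟩ (fold X (m+1) u))).1
        = X.C.src (m+1) u.1 ∧
     (ev X m (face X m ⟨m+1, by omega⟩ (fold X (m+1) u))).1
        = X.C.tgt (m+1) u.1) ∨
    ((ev X m (face X m ⟨m, by omega⟩ (fold X (m+1) u))).1
        = X.C.tgt (m+1) u.1 ∧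
     (ev X m (face X m ⟨m+1, by omega⟩ (fold X (m+1) u))).1
        = X.C.src (m+1) u.1)
  fold_face_d : ∀ (m : ℕ) (i : Fin (m+2)) (p : ℕ) (α : Bool),
    (∀ (X : NCat) (u : trP X (m+1)),
        (ev X m (face X m i (fold X (m+1) u))).1
          = (if α then X.C.tgt p u.1 else X.C.src p u.1)) →
    ∀ (X : NCat) (u u' : trP X (m+1)),
      u'.1 = (if α then X.C.tgt p u.1 else X.C.src p u.1) →
      face X m i (fold X (m+1) u) = face X m i (fold X (m+1) u')

/-- A morphism of cuts: a natural transformation commuting with the simplicial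
structure and preserving the evaluation maps. -/
structure CutMorphism (K L : RegularCut) where
  φ : ∀ (X : NCat) (n : ℕ), K.F X n → L.F X n
  φ_map : ∀ {X Y : NCat} (g : NCFunctor X.C Y.C) n (x : K.F X n),
    φ Y n (K.map g n x) = L.map g n (φ X n x)
  φ_face : ∀ (X : NCat) n (i : Fin (n+2)) (x : K.F X (n+1)),
    φ X n (K.face X n i x) = L.face X n i (φ X (n+1) x)
  φ_degen : ∀ (X : NCat) n (i : Fin (n+1)) (x : K.F X n),
    φ X (n+1) (K.degen X n i x) = L.degen X n i (φ X n x)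
  φ_ev : ∀ (X : NCat) n (x : K.F X n),
    (L.ev X n (φ X n x)).1 = (K.ev X n x).1

theorem cutMorphism_fold (K L : RegularCut) (f : CutMorphism K L) :
    ∀ (n : ℕ) (X : NCat) (u : trP X n),
      f.φ X n (K.fold X n u) = L.fold X n u := by
  intro n
  induction n with
  | zero =>
    intro X u
    apply (L.ev0_bij X).1
    rw [L.fold_ev]
    exact Subtype.ext (by rw [f.φ_ev, K.fold_ev])
  | succ n ih =>
    apply L.lift_unique n
      (fun X u => f.φ X (n+1) (K.fold X (n+1) u))
      (fun X u => L.fold X (n+1) u)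
    · intro X Y g u v hv
      rw [← f.φ_map, K.fold_map g (n+1) u v hv]
    · intro X Y g u v hv
      exact L.fold_map g (n+1) u v hv
    · intro X u
      exact Subtype.ext (by rw [f.φ_ev, K.fold_ev])
    · intro X u
      exact L.fold_ev X (n+1) u
    · intro X u u' h
      rw [K.fold_succ X n u u' h.symm, f.φ_degen, ih,
        L.fold_succ X n u u' h.symm]

/-- A morphism of regular cuts commutes with the folding operators:
`Φ^G ∘ f = f ∘ Φ^F`. -/
theorem stmt16 (K L : RegularCut) (f : CutMorphism K L) (X : NCat) (n : ℕ)
    (x : K.F X n) :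
    f.φ X n (K.fold X n (K.ev X n x))
      = L.fold X n (L.ev X n (f.φ X n x)) := by
  have h : L.ev X n (f.φ X n x) = K.ev X n x :=
    Subtype.ext (f.φ_ev X n x)
  rw [h, cutMorphism_fold K L f n X (K.ev X n x)]
end

section
/- Let F be a regular cut. For any ω-category C and any (n+1)-morphism u of C with n ≥ 1, the element □ₙ₊₁^F(u) ∈ Fₙ(C) is a simplicial homotopy between □ₙ^F(sₙu) and □ₙ^F(tₙu): its faces ∂ₙ₋₁ and ∂ₙ are {□ₙ^F(sₙu), □ₙ^F(tₙu)} while for 0 ≤ i ≤ n−2, ∂ᵢ□ₙ₊₁^F(u) = ε_{n-2}∂ᵢ□ₙ^F(sₙu) = ε_{n-2}∂ᵢ□ₙ^F(tₙu) is degenerate. -/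
section Aux

namespace OmegaCat

variable (C : OmegaCat)

theorem dimLE_mono {n k : ℕ} (h : n ≤ k) {x : C.A} (hx : C.dimLE n x) :
    C.dimLE k x := by
  obtain ⟨hs, ht⟩ := hx
  constructor
  · conv_lhs => rw [← hs]
    rw [C.src_src_le k n h, hs]
  · conv_lhs => rw [← ht]
    rw [C.tgt_tgt_le k n h, ht]

theorem dimLE_src (n : ℕ) (x : C.A) : C.dimLE n (C.src n x) :=
  ⟨C.src_src_le n n le_rfl x, C.tgt_src_le n n le_rfl x⟩

theorem dimLE_tgt (n : ℕ) (x : C.A) : C.dimLE n (C.tgt n x) :=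
  ⟨C.src_tgt_le n n le_rfl x, C.tgt_tgt_le n n le_rfl x⟩

theorem posdim_src (hnc : C.NonContracting) {x : C.A} (hx : C.PosDim x)
    {p : ℕ} (hp : 1 ≤ p) : C.PosDim (C.src p x) := by
  rcases eq_or_lt_of_le hp with h1 | h1
  · rw [← h1]; exact (hnc x hx).1.2
  · intro h0
    have h2 : C.src 1 (C.src p x) = C.src 1 x := C.src_src_lt 1 p h1 x
    have h3 : C.src 1 (C.src p x) = C.src p x := (C.dimLE_mono (by omega) h0).1
    have := (hnc x hx).1.2
    rw [← h2, h3] at this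
    exact this h0

theorem posdim_tgt (hnc : C.NonContracting) {x : C.A} (hx : C.PosDim x)
    {p : ℕ} (hp : 1 ≤ p) : C.PosDim (C.tgt p x) := by
  rcases eq_or_lt_of_le hp with h1 | h1
  · rw [← h1]; exact (hnc x hx).2.2
  · intro h0
    have h2 : C.src 1 (C.tgt p x) = C.src 1 x := C.src_tgt_lt 1 p h1 x
    have h3 : C.src 1 (C.tgt p x) = C.tgt p x := (C.dimLE_mono (by omega) h0).1
    have := (hnc x hx).1.2
    rw [← h2, h3] at this
    exact this h0

end OmegaCat

end Aux
section Globe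

/-- Cells of the free globe: `none` is the top `N`-cell, `some (false, k)` /
`some (true, k)` are the `k`-dimensional source/target cells. -/
abbrev GA := Option (Bool × ℕ)

def gdim (N : ℕ) : GA → ℕ
  | none => N
  | some p => p.2

def gsrc (N n : ℕ) (c : GA) : GA := if gdim N c ≤ n then c else some (false, n)
def gtgt (N n : ℕ) (c : GA) : GA := if gdim N c ≤ n then c else some (true, n)
def gcomp (N n : ℕ) (a b : GA) : GA := if gdim N a ≤ n then b else a

theorem gdim_some (N : ℕ) (b : Bool) (k : ℕ) : gdim N (some (b, k)) = k := rfl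

theorem gsrc_of_le (N n : ℕ) {c : GA} (h : gdim N c ≤ n) : gsrc N n c = c := if_pos h
theorem gtgt_of_le (N n : ℕ) {c : GA} (h : gdim N c ≤ n) : gtgt N n c = c := if_pos h
theorem gsrc_of_gt (N n : ℕ) {c : GA} (h : n < gdim N c) : gsrc N n c = some (false, n) :=
  if_neg (by omega)
theorem gtgt_of_gt (N n : ℕ) {c : GA} (h : n < gdim N c) : gtgt N n c = some (true, n) :=
  if_neg (by omega)
theorem gcomp_of_le (N n : ℕ) {a : GA} (b : GA) (h : gdim N a ≤ n) :
    gcomp N n a b = b := if_pos h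
theorem gcomp_of_gt (N n : ℕ) {a : GA} (b : GA) (h : n < gdim N a) :
    gcomp N n a b = a := if_neg (by omega)

theorem gdim_gsrc (N n : ℕ) (c : GA) : gdim N (gsrc N n c) = min (gdim N c) n := by
  by_cases h : gdim N c ≤ n
  · rw [gsrc_of_le N n h]; omega
  · rw [gsrc_of_gt N n (by omega), gdim_some]; omega

theorem gdim_gtgt (N n : ℕ) (c : GA) : gdim N (gtgt N n c) = min (gdim N c) n := by
  by_cases h : gdim N c ≤ n
  · rw [gtgt_of_le N n h]; omega
  · rw [gtgt_of_gt N n (by omega), gdim_some]; omega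

theorem gsrc_eq_iff (N n : ℕ) (c : GA) : gsrc N n c = c ↔ gdim N c ≤ n := by
  constructor
  · intro h
    by_contra hc
    rw [gsrc_of_gt N n (by omega)] at h
    have := congrArg (gdim N) h
    rw [gdim_some] at this
    omega
  · exact gsrc_of_le N n

theorem eq_true_of_gsrc (N n : ℕ) {y : GA} (h : gsrc N n y = some (true, n)) :
    y = some (true, n) := by
  by_cases hy : gdim N y ≤ n
  · rw [gsrc_of_le N n hy] at h; exact h
  · rw [gsrc_of_gt N n (by omega)] at h; simp at h

def Globe (N : ℕ) : OmegaCat where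
  A := GA
  comp := gcomp N
  src := gsrc N
  tgt := gtgt N
  src_comp := by
    intro n x y h
    by_cases hx : gdim N x ≤ n
    · rw [gcomp_of_le N n y hx]
      rw [gtgt_of_le N n hx] at h
      rw [← h, gsrc_of_le N n hx]
    · rw [gcomp_of_gt N n y (by omega)]
  tgt_comp := by
    intro n x y h
    by_cases hx : gdim N x ≤ n
    · rw [gcomp_of_le N n y hx]
    · rw [gcomp_of_gt N n y (by omega)]
      rw [gtgt_of_gt N n (by omega)] at h
      have hy := eq_true_of_gsrc N n h.symm
      rw [gtgt_of_gt N n (by omega), hy, gtgt_of_le N n (by rw [gdim_some])]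
  comp_src_unit := by
    intro n x
    exact gcomp_of_le N n x (by rw [gdim_gsrc]; omega)
  comp_tgt_unit := by
    intro n x
    by_cases hx : gdim N x ≤ n
    · rw [gcomp_of_le N n _ hx, gtgt_of_le N n hx]
    · rw [gcomp_of_gt N n _ (by omega)]
  comp_assoc := by
    intro n x y z _ _
    by_cases hx : gdim N x ≤ n
    · rw [gcomp_of_le N n y hx, gcomp_of_le N n _ hx]
    · rw [gcomp_of_gt N n y (by omega), gcomp_of_gt N n z (by omega),
        gcomp_of_gt N n _ (by omega)]
  src_src_le := fun i j hji x => gsrc_of_le N i (by rw [gdim_gsrc]; omega)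
  tgt_src_le := fun i j hji x => gtgt_of_le N i (by rw [gdim_gsrc]; omega)
  src_tgt_le := fun i j hji x => gsrc_of_le N i (by rw [gdim_gtgt]; omega)
  tgt_tgt_le := fun i j hji x => gtgt_of_le N i (by rw [gdim_gtgt]; omega)
  src_src_lt := by
    intro i j hij x
    by_cases hx : gdim N x ≤ i
    · rw [gsrc_of_le N j (by omega), gsrc_of_le N i hx]
    · rw [gsrc_of_gt N i (c := gsrc N j x) (by rw [gdim_gsrc]; omega),
        gsrc_of_gt N i (by omega)]
  src_tgt_lt := by
    intro i j hij x
    by_cases hx : gdim N x ≤ i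
    · rw [gtgt_of_le N j (by omega), gsrc_of_le N i hx]
    · rw [gsrc_of_gt N i (c := gtgt N j x) (by rw [gdim_gtgt]; omega),
        gsrc_of_gt N i (by omega)]
  tgt_src_lt := by
    intro i j hij x
    by_cases hx : gdim N x ≤ i
    · rw [gsrc_of_le N j (by omega), gtgt_of_le N i hx]
    · rw [gtgt_of_gt N i (c := gsrc N j x) (by rw [gdim_gsrc]; omega),
        gtgt_of_gt N i (by omega)]
  tgt_tgt_lt := by
    intro i j hij x
    by_cases hx : gdim N x ≤ i
    · rw [gtgt_of_le N j (by omega), gtgt_of_le N i hx]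
    · rw [gtgt_of_gt N i (c := gtgt N j x) (by rw [gdim_gtgt]; omega),
        gtgt_of_gt N i (by omega)]
  interchange := by
    intro p q hpq x y z t h1 h2 h3 h4
    by_cases hx : gdim N x ≤ p
    · rw [gcomp_of_le N p y hx, gcomp_of_le N q z (by omega)]
      by_cases hz : gdim N z ≤ p
      · rw [gcomp_of_le N p t hz, gcomp_of_le N p _ hz]
      · rw [gcomp_of_gt N p t (by omega), gcomp_of_gt N p _ (by omega)]
        refine gcomp_of_le N q z ?_
        by_contra hy
        rw [gtgt_of_gt N q (by omega)] at h4
        have ht := eq_true_of_gsrc N q h4.symm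
        rw [ht, gtgt_of_gt N p (by omega),
          gsrc_of_gt N p (by rw [gdim_some]; omega)] at h2
        simp at h2
    · have hy : y = some (true, p) := by
        rw [gtgt_of_gt N p (by omega)] at h1
        exact eq_true_of_gsrc N p h1.symm
      rw [gcomp_of_gt N p y (by omega),
        gcomp_of_le N q t (by rw [hy, gdim_some]; omega)]
      by_cases hxq : gdim N x ≤ q
      · rw [gcomp_of_le N q z hxq, gcomp_of_le N q _ hxq]
      · have hz : z = some (true, q) := by
          rw [gtgt_of_gt N q (by omega)] at h3
          exact eq_true_of_gsrc N q h3.symm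
        rw [gcomp_of_gt N q (a := x) z (by omega),
          gcomp_of_gt N p (a := z) t (by rw [hz, gdim_some]; omega),
          gcomp_of_gt N q (a := x) z (by omega),
          gcomp_of_gt N p (a := x) t (by omega)]
  src_comp_ne := by
    intro i j hij x y h
    by_cases hx : gdim N x ≤ j
    · rw [gcomp_of_le N j y hx, gcomp_of_le N j _ (by rw [gdim_gsrc]; omega)]
    · rw [gcomp_of_gt N j y (by omega)]
      have hy : y = some (true, j) := by
        rw [gtgt_of_gt N j (by omega)] at h
        exact eq_true_of_gsrc N j h.symm
      by_cases hi : i ≤ j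
      · have hij' : i < j := by omega
        rw [gcomp_of_le N j _ (by rw [gdim_gsrc]; omega)]
        rw [hy, gsrc_of_gt N i (c := some (true, j)) (by rw [gdim_some]; omega),
          gsrc_of_gt N i (c := x) (by omega)]
      · rw [gcomp_of_gt N j _ (by rw [gdim_gsrc]; omega)]
  tgt_comp_ne := by
    intro i j hij x y h
    by_cases hx : gdim N x ≤ j
    · rw [gcomp_of_le N j y hx, gcomp_of_le N j _ (by rw [gdim_gtgt]; omega)]
    · rw [gcomp_of_gt N j y (by omega)]
      have hy : y = some (true, j) := by
        rw [gtgt_of_gt N j (by omega)] at h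
        exact eq_true_of_gsrc N j h.symm
      by_cases hi : i ≤ j
      · have hij' : i < j := by omega
        rw [gcomp_of_le N j _ (by rw [gdim_gtgt]; omega)]
        rw [hy, gtgt_of_gt N i (c := some (true, j)) (by rw [gdim_some]; omega),
          gtgt_of_gt N i (c := x) (by omega)]
      · rw [gcomp_of_gt N j _ (by rw [gdim_gtgt]; omega)]
  finiteDim := fun x =>
    ⟨gdim N x, gsrc_of_le N _ le_rfl, gtgt_of_le N _ le_rfl⟩

theorem globe_dimLE (N n : ℕ) (c : (Globe N).A) :
    (Globe N).dimLE n c ↔ gdim N c ≤ n := by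
  constructor
  · intro h
    exact (gsrc_eq_iff N n c).1 h.1
  · intro h
    exact ⟨gsrc_of_le N n h, gtgt_of_le N n h⟩

theorem globe_posDim (N : ℕ) (c : (Globe N).A) :
    (Globe N).PosDim c ↔ 1 ≤ gdim N c := by
  unfold OmegaCat.PosDim
  rw [globe_dimLE]
  omega

def GlobeN (N : ℕ) : NCat where
  C := Globe N
  nc := by
    intro c hc
    rw [globe_posDim] at hc
    constructor
    · exact ⟨(globe_dimLE N 1 _).2 (by rw [show (Globe N).src 1 c = gsrc N 1 c from rfl]; have := gdim_gsrc N 1 c; omega),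
        (globe_posDim N _).2 (by rw [show (Globe N).src 1 c = gsrc N 1 c from rfl]; have := gdim_gsrc N 1 c; omega)⟩
    · exact ⟨(globe_dimLE N 1 _).2 (by rw [show (Globe N).tgt 1 c = gtgt N 1 c from rfl]; have := gdim_gtgt N 1 c; omega),
        (globe_posDim N _).2 (by rw [show (Globe N).tgt 1 c = gtgt N 1 c from rfl]; have := gdim_gtgt N 1 c; omega)⟩

end Globe
section GFunctor

def gf (X : OmegaCat) (u : X.A) : GA → X.A
  | none => u
  | some (b, k) => if b then X.tgt k u else X.src k u

theorem gf_src (X : OmegaCat) (u : X.A) (N : ℕ) (hd : X.dimLE N u) (n : ℕ) (c : GA) :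
    gf X u (gsrc N n c) = X.src n (gf X u c) := by
  match c with
  | none =>
    by_cases h : N ≤ n
    · rw [gsrc_of_le N n (c := none) h]
      exact ((X.dimLE_mono h hd).1).symm
    · rw [gsrc_of_gt N n (c := none) (by simpa [gdim] using h)]
      rfl
  | some (b, k) =>
    by_cases h : k ≤ n
    · rw [gsrc_of_le N n (c := some (b, k)) h]
      show gf X u (some (b,k)) = _
      cases b
      · show X.src k u = X.src n (X.src k u)
        exact (X.src_src_le n k h u).symm
      · show X.tgt k u = X.src n (X.tgt k u)
        exact (X.src_tgt_le n k h u).symm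
    · rw [gsrc_of_gt N n (c := some (b, k)) (by simpa [gdim] using h)]
      show X.src n u = X.src n (gf X u (some (b,k)))
      cases b
      · show X.src n u = X.src n (X.src k u)
        exact (X.src_src_lt n k (by omega) u).symm
      · show X.src n u = X.src n (X.tgt k u)
        exact (X.src_tgt_lt n k (by omega) u).symm

theorem gf_tgt (X : OmegaCat) (u : X.A) (N : ℕ) (hd : X.dimLE N u) (n : ℕ) (c : GA) :
    gf X u (gtgt N n c) = X.tgt n (gf X u c) := by
  match c with
  | none =>
    by_cases h : N ≤ n
    · rw [gtgt_of_le N n (c := none) h]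
      exact ((X.dimLE_mono h hd).2).symm
    · rw [gtgt_of_gt N n (c := none) (by simpa [gdim] using h)]
      rfl
  | some (b, k) =>
    by_cases h : k ≤ n
    · rw [gtgt_of_le N n (c := some (b, k)) h]
      show gf X u (some (b,k)) = _
      cases b
      · show X.src k u = X.tgt n (X.src k u)
        exact (X.tgt_src_le n k h u).symm
      · show X.tgt k u = X.tgt n (X.tgt k u)
        exact (X.tgt_tgt_le n k h u).symm
    · rw [gtgt_of_gt N n (c := some (b, k)) (by simpa [gdim] using h)]
      show X.tgt n u = X.tgt n (gf X u (some (b,k)))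
      cases b
      · show X.tgt n u = X.tgt n (X.src k u)
        exact (X.tgt_src_lt n k (by omega) u).symm
      · show X.tgt n u = X.tgt n (X.tgt k u)
        exact (X.tgt_tgt_lt n k (by omega) u).symm

def globeFunctor (N : ℕ) (X : NCat) (u : X.C.A) (hp : X.C.PosDim u)
    (hd : X.C.dimLE N u) : NCFunctor (Globe N) X.C where
  f := gf X.C u
  map_src := fun n c => gf_src X.C u N hd n c
  map_tgt := fun n c => gf_tgt X.C u N hd n c
  map_comp := by
    intro n a b h
    by_cases ha : gdim N a ≤ n
    · rw [show (Globe N).comp n a b = b from gcomp_of_le N n b ha]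
      have h' : a = gsrc N n b := by
        rw [show (Globe N).tgt n a = gtgt N n a from rfl, gtgt_of_le N n ha] at h
        exact h
      have : gf X.C u a = X.C.src n (gf X.C u b) := by
        rw [h']
        exact gf_src X.C u N hd n b
      rw [this, X.C.comp_src_unit]
    · rw [show (Globe N).comp n a b = a from gcomp_of_gt N n b (by omega)]
      have hb : b = some (true, n) := by
        replace h : (some (true, n) : GA) = gsrc N n b := (gtgt_of_gt N n (c := a) (by omega)).symm.trans h
        exact eq_true_of_gsrc N n h.symm
      have : gf X.C u b = X.C.tgt n (gf X.C u a) := by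
        rw [hb, show (some (true, n) : GA) = gtgt N n a from (gtgt_of_gt N n (by omega)).symm]
        exact gf_tgt X.C u N hd n a
      rw [this, X.C.comp_tgt_unit]
  nc := by
    intro c hc
    have hdim : gdim N c = 1 := by
      have h1 := (globe_dimLE N 1 c).1 hc.1
      have h2 := (globe_posDim N c).1 hc.2
      omega
    match c with
    | none =>
      show X.C.OneDim u
      exact ⟨by rw [show N = 1 from hdim] at hd; exact hd, hp⟩
    | some (b, k) =>
      have hk : k = 1 := hdim
      subst hk
      cases b
      · exact (X.nc u hp).1
      · exact (X.nc u hp).2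

/-- The canonical top cell as an element of `trP`. -/
def topP (N n : ℕ) (h1 : 1 ≤ N) (h2 : N ≤ n+1) : trP (GlobeN N) n :=
  ⟨none, (globe_posDim N none).2 h1, (globe_dimLE N (n+1) none).2 h2⟩

theorem nat_ev (K : RegularCut) (n : ℕ) (i : Fin (n+2)) (c : GA)
    (hc : (K.ev (GlobeN (n+2)) n (K.face (GlobeN (n+2)) n i
        (K.fold (GlobeN (n+2)) (n+1) (topP (n+2) (n+1) (by omega) (by omega))))).1 = c)
    (X : NCat) (u : trP X (n+1)) :
    (K.ev X n (K.face X n i (K.fold X (n+1) u))).1 = gf X.C u.1 c := by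
  set G := GlobeN (n+2) with hG
  set g : NCFunctor G.C X.C := globeFunctor (n+2) X u.1 u.2.1 u.2.2 with hg
  set T := topP (n+2) (n+1) (show 1 ≤ n+2 by omega) (show n+2 ≤ n+2 by omega) with hT
  have h1 : K.map g (n+1) (K.fold G (n+1) T) = K.fold X (n+1) u :=
    K.fold_map g (n+1) T u rfl
  have h3 := K.ev_map g n (K.face G n i (K.fold G (n+1) T))
  rw [K.map_face g n i, h1] at h3
  rw [h3]
  exact congrArg g.f hc

end GFunctor
section Main

theorem gf_some (X : OmegaCat) (u : X.A) (b : Bool) (k : ℕ) :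
    gf X u (some (b, k)) = if b then X.tgt k u else X.src k u := rfl

theorem clause1_succ (K : RegularCut) (X : NCat) (k : ℕ) (u : trP X (k+2))
    (vs vt : trP X (k+1))
    (hvs : vs.1 = X.C.src (k+2) u.1) (hvt : vt.1 = X.C.tgt (k+2) u.1) :
    ((K.face X (k+1) ⟨k+1, by omega⟩ (K.fold X (k+2) u) = K.fold X (k+1) vs ∧
      K.face X (k+1) ⟨k+2, by omega⟩ (K.fold X (k+2) u) = K.fold X (k+1) vt) ∨
     (K.face X (k+1) ⟨k+1, by omega⟩ (K.fold X (k+2) u) = K.fold X (k+1) vt ∧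
      K.face X (k+1) ⟨k+2, by omega⟩ (K.fold X (k+2) u) = K.fold X (k+1) vs)) := by
  set G := GlobeN (k+3) with hG
  set T := topP (k+3) (k+2) (by omega) (by omega) with hT
  have hsrc : G.C.src (k+2) T.1 = some (false, k+2) :=
    gsrc_of_gt (k+3) (k+2) (c := none) (by simp [gdim])
  have htgt : G.C.tgt (k+2) T.1 = some (true, k+2) :=
    gtgt_of_gt (k+3) (k+2) (c := none) (by simp [gdim])
  set ws : trP X (k+2) := ⟨vs.1, vs.2.1, X.C.dimLE_mono (by omega) vs.2.2⟩ with hws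
  set wt : trP X (k+2) := ⟨vt.1, vt.2.1, X.C.dimLE_mono (by omega) vt.2.2⟩ with hwt
  have hfs : K.fold X (k+2) ws = K.degen X (k+1) ⟨k+1, by omega⟩ (K.fold X (k+1) vs) :=
    K.fold_succ X (k+1) ws vs rfl
  have hft : K.fold X (k+2) wt = K.degen X (k+1) ⟨k+1, by omega⟩ (K.fold X (k+1) vt) :=
    K.fold_succ X (k+1) wt vt rfl
  have hds : ∀ v : trP X (k+1), K.face X (k+1) ⟨k+1, by omega⟩
      (K.degen X (k+1) ⟨k+1, by omega⟩ (K.fold X (k+1) v)) = K.fold X (k+1) v :=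
    fun v => K.face_degen_self X k ⟨k+1, by omega⟩ ⟨k+1, by omega⟩ (Or.inl rfl) (K.fold X (k+1) v)
  have hdt : ∀ v : trP X (k+1), K.face X (k+1) ⟨k+2, by omega⟩
      (K.degen X (k+1) ⟨k+1, by omega⟩ (K.fold X (k+1) v)) = K.fold X (k+1) v :=
    fun v => K.face_degen_self X k ⟨k+2, by omega⟩ ⟨k+1, by omega⟩ (Or.inr rfl) (K.fold X (k+1) v)
  rcases K.fold_face_st G (k+1) T with ⟨h1, h2⟩ | ⟨h1, h2⟩
  · left
    rw [hsrc] at h1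
    rw [htgt] at h2
    have u1 : ∀ (Y : NCat) (w : trP Y (k+2)),
        (K.ev Y (k+1) (K.face Y (k+1) ⟨k+1, by omega⟩ (K.fold Y (k+2) w))).1
          = (if (false : Bool) then Y.C.tgt (k+2) w.1 else Y.C.src (k+2) w.1) :=
      fun Y w => (nat_ev K (k+1) ⟨k+1, by omega⟩ (some (false, k+2)) h1 Y w).trans
        (gf_some Y.C w.1 false (k+2))
    have u2 : ∀ (Y : NCat) (w : trP Y (k+2)),
        (K.ev Y (k+1) (K.face Y (k+1) ⟨k+2, by omega⟩ (K.fold Y (k+2) w))).1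
          = (if (true : Bool) then Y.C.tgt (k+2) w.1 else Y.C.src (k+2) w.1) :=
      fun Y w => (nat_ev K (k+1) ⟨k+2, by omega⟩ (some (true, k+2)) h2 Y w).trans
        (gf_some Y.C w.1 true (k+2))
    constructor
    · have e1 := K.fold_face_d (k+1) ⟨k+1, by omega⟩ (k+2) false u1 X u ws (by simpa using hvs)
      rw [e1, hfs, hds]
    · have e2 := K.fold_face_d (k+1) ⟨k+2, by omega⟩ (k+2) true u2 X u wt (by simpa using hvt)
      rw [e2, hft, hdt]
  · right
    rw [htgt] at h1
    rw [hsrc] at h2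
    have u1 : ∀ (Y : NCat) (w : trP Y (k+2)),
        (K.ev Y (k+1) (K.face Y (k+1) ⟨k+1, by omega⟩ (K.fold Y (k+2) w))).1
          = (if (true : Bool) then Y.C.tgt (k+2) w.1 else Y.C.src (k+2) w.1) :=
      fun Y w => (nat_ev K (k+1) ⟨k+1, by omega⟩ (some (true, k+2)) h1 Y w).trans
        (gf_some Y.C w.1 true (k+2))
    have u2 : ∀ (Y : NCat) (w : trP Y (k+2)),
        (K.ev Y (k+1) (K.face Y (k+1) ⟨k+2, by omega⟩ (K.fold Y (k+2) w))).1
          = (if (false : Bool) then Y.C.tgt (k+2) w.1 else Y.C.src (k+2) w.1) :=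
      fun Y w => (nat_ev K (k+1) ⟨k+2, by omega⟩ (some (false, k+2)) h2 Y w).trans
        (gf_some Y.C w.1 false (k+2))
    constructor
    · have e1 := K.fold_face_d (k+1) ⟨k+1, by omega⟩ (k+2) true u1 X u wt (by simpa using hvt)
      rw [e1, hft, hds]
    · have e2 := K.fold_face_d (k+1) ⟨k+2, by omega⟩ (k+2) false u2 X u ws (by simpa using hvs)
      rw [e2, hfs, hdt]

theorem clause1 (K : RegularCut) (X : NCat) (m : ℕ) (u : trP X (m+1))
    (vs vt : trP X m)
    (hvs : vs.1 = X.C.src (m+1) u.1) (hvt : vt.1 = X.C.tgt (m+1) u.1) :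
    ((K.face X m ⟨m, by omega⟩ (K.fold X (m+1) u) = K.fold X m vs ∧
      K.face X m ⟨m+1, by omega⟩ (K.fold X (m+1) u) = K.fold X m vt) ∨
     (K.face X m ⟨m, by omega⟩ (K.fold X (m+1) u) = K.fold X m vt ∧
      K.face X m ⟨m+1, by omega⟩ (K.fold X (m+1) u) = K.fold X m vs)) := by
  cases m with
  | zero =>
    have inj := (K.ev0_bij X).1
    rcases K.fold_face_st X 0 u with ⟨h1, h2⟩ | ⟨h1, h2⟩
    · exact Or.inl ⟨inj (by rw [K.fold_ev]; exact Subtype.ext (h1.trans hvs.symm)),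
        inj (by rw [K.fold_ev]; exact Subtype.ext (h2.trans hvt.symm))⟩
    · exact Or.inr ⟨inj (by rw [K.fold_ev]; exact Subtype.ext (h1.trans hvt.symm)),
        inj (by rw [K.fold_ev]; exact Subtype.ext (h2.trans hvs.symm))⟩
  | succ k => exact clause1_succ K X k u vs vt hvs hvt

end Main
section Main2

theorem clause2 (K : RegularCut) (X : NCat) (m : ℕ) (u : trP X (m+2))
    (i : Fin (m+2)) (hi : (i:ℕ) ≤ m) (vs vt : trP X (m+1))
    (hvs : vs.1 = X.C.src (m+2) u.1) (hvt : vt.1 = X.C.tgt (m+2) u.1) :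
    K.face X (m+1) ⟨(i:ℕ), by have := i.isLt; omega⟩ (K.fold X (m+2) u)
        = K.degen X m ⟨m, by omega⟩
            (K.face X m ⟨(i:ℕ), by have := i.isLt; omega⟩
              (K.fold X (m+1) vs)) ∧
    K.face X (m+1) ⟨(i:ℕ), by have := i.isLt; omega⟩ (K.fold X (m+2) u)
        = K.degen X m ⟨m, by omega⟩
            (K.face X m ⟨(i:ℕ), by have := i.isLt; omega⟩
              (K.fold X (m+1) vt)) := by
  have i' : Fin (m+3) := ⟨(i:ℕ), by omega⟩
  -- the evaluation of the i-th face of the folding of the top cell of the globe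
  set G := GlobeN (m+3) with hGdef
  set T := topP (m+3) (m+2) (by omega) (by omega) with hTdef
  set e := K.ev G (m+1) (K.face G (m+1) ⟨(i:ℕ), by omega⟩ (K.fold G (m+2) T)) with hedef
  have hpos : 1 ≤ gdim (m+3) e.1 := (globe_posDim (m+3) e.1).1 e.2.1
  have hle : gdim (m+3) e.1 ≤ m+2 := (globe_dimLE (m+3) (m+2) e.1).1 e.2.2
  obtain ⟨b, p, hbp⟩ : ∃ b p, e.1 = some (b, p) := by
    rcases he' : e.1 with _ | ⟨b, p⟩
    · rw [he'] at hle; simp [gdim] at hle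
    · exact ⟨b, p, rfl⟩
  rw [hbp, gdim_some] at hpos hle
  have huni : ∀ (Y : NCat) (w : trP Y (m+2)),
      (K.ev Y (m+1) (K.face Y (m+1) ⟨(i:ℕ), by omega⟩ (K.fold Y (m+2) w))).1
        = (if b then Y.C.tgt p w.1 else Y.C.src p w.1) :=
    fun Y w => (nat_ev K (m+1) ⟨(i:ℕ), by omega⟩ (some (b, p)) hbp Y w).trans
      (gf_some Y.C w.1 b p)
  -- p ≤ m+1
  have hple : p ≤ m+1 := by
    by_contra hp'
    have hp2 : p = m+2 := by omega
    subst hp2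
    have happ := huni (GlobeN (m+2)) (topP (m+2) (m+2) (by omega) (by omega))
    have hrhs : (if b then (GlobeN (m+2)).C.tgt (m+2) (topP (m+2) (m+2) (by omega) (by omega)).1
        else (GlobeN (m+2)).C.src (m+2) (topP (m+2) (m+2) (by omega) (by omega)).1)
        = (none : GA) := by
      cases b
      · exact gsrc_of_le (m+2) (m+2) (c := none) (by simp [gdim])
      · exact gtgt_of_le (m+2) (m+2) (c := none) (by simp [gdim])
    rw [hrhs] at happ
    rw [K.fold_succ (GlobeN (m+2)) (m+1) (topP (m+2) (m+2) (by omega) (by omega))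
        (topP (m+2) (m+1) (by omega) (by omega)) rfl,
      K.face_degen_lt (GlobeN (m+2)) m ⟨(i:ℕ), by omega⟩ ⟨m+1, by omega⟩ (by simp; omega),
      K.ev_degen] at happ
    have h5 := (K.ev (GlobeN (m+2)) m (K.face (GlobeN (m+2)) m ⟨(i:ℕ), by omega⟩
        (K.fold (GlobeN (m+2)) (m+1) (topP (m+2) (m+1) (by omega) (by omega))))).2.2
    rw [happ] at h5
    have := (globe_dimLE (m+2) (m+1) none).1 h5
    simp [gdim] at this
  -- the intermediate element δ
  have hpd : X.C.PosDim (if b then X.C.tgt p u.1 else X.C.src p u.1) := by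
    cases b
    · show X.C.PosDim (X.C.src p u.1)
      exact X.C.posdim_src X.nc u.2.1 hpos
    · show X.C.PosDim (X.C.tgt p u.1)
      exact X.C.posdim_tgt X.nc u.2.1 hpos
  have hdl : X.C.dimLE (m+3) (if b then X.C.tgt p u.1 else X.C.src p u.1) := by
    cases b
    · exact X.C.dimLE_mono (by omega) (X.C.dimLE_src p u.1)
    · exact X.C.dimLE_mono (by omega) (X.C.dimLE_tgt p u.1)
  set δ : trP X (m+2) := ⟨(if b then X.C.tgt p u.1 else X.C.src p u.1), hpd, hdl⟩ with hδdef
  set ws : trP X (m+2) := ⟨vs.1, vs.2.1, X.C.dimLE_mono (by omega) vs.2.2⟩ with hwsdef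
  set wt : trP X (m+2) := ⟨vt.1, vt.2.1, X.C.dimLE_mono (by omega) vt.2.2⟩ with hwtdef
  have e1 := K.fold_face_d (m+1) ⟨(i:ℕ), by omega⟩ p b huni X u δ rfl
  have hδs : δ.1 = (if b then X.C.tgt p ws.1 else X.C.src p ws.1) := by
    show (if b then X.C.tgt p u.1 else X.C.src p u.1) = _
    cases b
    · show X.C.src p u.1 = X.C.src p vs.1
      rw [hvs, X.C.src_src_lt p (m+2) (by omega)]
    · show X.C.tgt p u.1 = X.C.tgt p vs.1
      rw [hvs, X.C.tgt_src_lt p (m+2) (by omega)]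
  have hδt : δ.1 = (if b then X.C.tgt p wt.1 else X.C.src p wt.1) := by
    show (if b then X.C.tgt p u.1 else X.C.src p u.1) = _
    cases b
    · show X.C.src p u.1 = X.C.src p vt.1
      rw [hvt, X.C.src_tgt_lt p (m+2) (by omega)]
    · show X.C.tgt p u.1 = X.C.tgt p vt.1
      rw [hvt, X.C.tgt_tgt_lt p (m+2) (by omega)]
  have e2 := K.fold_face_d (m+1) ⟨(i:ℕ), by omega⟩ p b huni X ws δ hδs
  have e3 := K.fold_face_d (m+1) ⟨(i:ℕ), by omega⟩ p b huni X wt δ hδt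
  constructor
  · rw [e1, ← e2, K.fold_succ X (m+1) ws vs rfl,
      K.face_degen_lt X m ⟨(i:ℕ), by omega⟩ ⟨m+1, by omega⟩ (by simp; omega)]
    rfl
  · rw [e1, ← e3, K.fold_succ X (m+1) wt vt rfl,
      K.face_degen_lt X m ⟨(i:ℕ), by omega⟩ ⟨m+1, by omega⟩ (by simp; omega)]
    rfl

end Main2
/-- For a regular cut and an `(n+1)`-morphism `u` of `X` with `n ≥ 1` (below
`n = m+1`, resp. `n = m+2` for the second clause), `□ₙ₊₁(u)` is a simplicial
homotopy between `□ₙ(sₙu)` and `□ₙ(tₙu)`: its faces `∂ₙ₋₁` and `∂ₙ` are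
`{□ₙ(sₙu), □ₙ(tₙu)}`, while for `0 ≤ i ≤ n−2` the face `∂ᵢ□ₙ₊₁(u)` equals the
degenerate element `ε_{n-2}∂ᵢ□ₙ(sₙu) = ε_{n-2}∂ᵢ□ₙ(tₙu)`. -/
theorem stmt17 (K : RegularCut) (X : NCat) :
    (∀ (m : ℕ) (u : trP X (m+1)), ¬ X.C.dimLE (m+1) u.1 →
      ∀ (vs vt : trP X m),
        vs.1 = X.C.src (m+1) u.1 → vt.1 = X.C.tgt (m+1) u.1 →
        ((K.face X m ⟨m, by omega⟩ (K.fold X (m+1) u) = K.fold X m vs ∧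
          K.face X m ⟨m+1, by omega⟩ (K.fold X (m+1) u) = K.fold X m vt) ∨
         (K.face X m ⟨m, by omega⟩ (K.fold X (m+1) u) = K.fold X m vt ∧
          K.face X m ⟨m+1, by omega⟩ (K.fold X (m+1) u) = K.fold X m vs))) ∧
    (∀ (m : ℕ) (u : trP X (m+2)), ¬ X.C.dimLE (m+2) u.1 →
      ∀ (i : Fin (m+2)), (i:ℕ) ≤ m →
      ∀ (vs vt : trP X (m+1)),
        vs.1 = X.C.src (m+2) u.1 → vt.1 = X.C.tgt (m+2) u.1 →
        K.face X (m+1) ⟨(i:ℕ), by have := i.isLt; omega⟩ (K.fold X (m+2) u)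
            = K.degen X m ⟨m, by omega⟩
                (K.face X m ⟨(i:ℕ), by have := i.isLt; omega⟩
                  (K.fold X (m+1) vs)) ∧
        K.face X (m+1) ⟨(i:ℕ), by have := i.isLt; omega⟩ (K.fold X (m+2) u)
            = K.degen X m ⟨m, by omega⟩
                (K.face X m ⟨(i:ℕ), by have := i.isLt; omega⟩
                  (K.fold X (m+1) vt))) := by
  constructor
  · intro m u _ vs vt hvs hvt
    exact clause1 K X m u vs vt hvs hvt
  · intro m u _ i hi vs vt hvs hvt
    exact clause2 K X m u i hi vs vt hvs hvt
end

section
/- Let 2ₙ be the free strict globular ω-category generated by a single n-morphism A (n ≥ 1). Then any natural transformation of functors f from trⁿP to tr^{n-1}P (on the category of non-contracting ω-categories) is of the form dₚ^α for some p ≤ n−1 and α ∈ {−,+}; i.e., f(u) ∈ {s₀u, t₀u, s₁u, t₁u, …, s_{n-1}u, t_{n-1}u} uniformly, determined by its value on the generator A of 2ₙ₊₁. -/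
namespace Stmt18Aux

/-- The "junk globe" ω-category: element `(k, α)` has dimension `k`. -/
def G : OmegaCat where
  A := ℕ × Bool
  comp n x y := if y.1 ≤ n then x else y
  src i x := if x.1 ≤ i then x else (i, false)
  tgt i x := if x.1 ≤ i then x else (i, true)
  src_comp := by
    intro n x y h; split_ifs at * <;>
      simp_all [Prod.ext_iff] <;> omega
  tgt_comp := by
    intro n x y h; split_ifs at * <;>
      simp_all [Prod.ext_iff] <;> omega
  comp_src_unit := by
    intro n x; split_ifs <;> simp_all [Prod.ext_iff] <;> omega
  comp_tgt_unit := by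
    intro n x; split_ifs <;> simp_all [Prod.ext_iff] <;> omega
  comp_assoc := by
    intro n x y z h1 h2; split_ifs at * <;>
      simp_all [Prod.ext_iff] <;> omega
  src_src_le := by
    intro i j hj x; split_ifs <;> simp_all [Prod.ext_iff] <;> omega
  tgt_src_le := by
    intro i j hj x; split_ifs <;> simp_all [Prod.ext_iff] <;> omega
  src_tgt_le := by
    intro i j hj x; split_ifs <;> simp_all [Prod.ext_iff] <;> omega
  tgt_tgt_le := by
    intro i j hj x; split_ifs <;> simp_all [Prod.ext_iff] <;> omega
  src_src_lt := by
    intro i j hj x; split_ifs <;> simp_all [Prod.ext_iff] <;> omega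
  src_tgt_lt := by
    intro i j hj x; split_ifs <;> simp_all [Prod.ext_iff] <;> omega
  tgt_src_lt := by
    intro i j hj x; split_ifs <;> simp_all [Prod.ext_iff] <;> omega
  tgt_tgt_lt := by
    intro i j hj x; split_ifs <;> simp_all [Prod.ext_iff] <;> omega
  interchange := by
    intro p q hpq x y z t h1 h2 h3 h4; split_ifs at * <;>
      simp_all [Prod.ext_iff] <;>
      first
        | omega
        | (split_ifs at * <;> simp_all [Prod.ext_iff] <;> omega)
        | (split_ifs at * <;> simp_all [Prod.ext_iff] <;> split_ifs at * <;> simp_all [Prod.ext_iff] <;> omega)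
  src_comp_ne := by
    intro i j hij x y h; split_ifs at * <;>
      simp_all [Prod.ext_iff] <;>
      first
        | omega
        | (split_ifs at * <;> simp_all [Prod.ext_iff] <;> omega)
        | (split_ifs at * <;> simp_all [Prod.ext_iff] <;> split_ifs at * <;> simp_all [Prod.ext_iff] <;> omega)
  tgt_comp_ne := by
    intro i j hij x y h; split_ifs at * <;>
      simp_all [Prod.ext_iff] <;>
      first
        | omega
        | (split_ifs at * <;> simp_all [Prod.ext_iff] <;> omega)
        | (split_ifs at * <;> simp_all [Prod.ext_iff] <;> split_ifs at * <;> simp_all [Prod.ext_iff] <;> omega)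
  finiteDim := by
    intro x; exact ⟨x.1, by simp, by simp⟩


lemma G_src (i : ℕ) (x : ℕ × Bool) :
    G.src i x = if x.1 ≤ i then x else (i, false) := rfl

lemma G_tgt (i : ℕ) (x : ℕ × Bool) :
    G.tgt i x = if x.1 ≤ i then x else (i, true) := rfl

lemma G_dimLE (k : ℕ) (x : ℕ × Bool) : G.dimLE k x ↔ x.1 ≤ k := by
  constructor
  · rintro ⟨h, -⟩
    rw [G_src] at h
    split_ifs at h with hc
    · exact hc
    · have h : ((k, false) : ℕ × Bool) = x := h; rw [Prod.ext_iff] at h; omega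
  · intro h
    constructor <;> simp [G_src, G_tgt, h] <;> rfl

lemma G_posDim (x : ℕ × Bool) : G.PosDim x ↔ 1 ≤ x.1 := by
  unfold OmegaCat.PosDim
  rw [G_dimLE]; omega

lemma G_oneDim (x : ℕ × Bool) : G.OneDim x ↔ x.1 = 1 := by
  unfold OmegaCat.OneDim
  rw [G_dimLE, G_dimLE]; omega

lemma G_nc : G.NonContracting := by
  intro x hx
  rw [G_posDim x] at hx
  constructor <;> [rw [G_src 1 x]; rw [G_tgt 1 x]] <;> split_ifs with h <;>
    rw [G_oneDim] <;> grind

/-- The junk globe as a non-contracting ω-category. -/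
def GN : NCat := ⟨G, G_nc⟩

/-- `dd α m` is `tgt m` if `α` and `src m` otherwise. -/
def dd (Y : OmegaCat) (α : Bool) (m : ℕ) (x : Y.A) : Y.A :=
  if α then Y.tgt m x else Y.src m x

lemma src_dd_le (Y : OmegaCat) (α : Bool) {m i : ℕ} (h : m ≤ i) (x : Y.A) :
    Y.src i (dd Y α m x) = dd Y α m x := by
  cases α <;> simp only [dd, if_true, if_false, Bool.false_eq_true] <;>
    [exact Y.src_src_le i m h x; exact Y.src_tgt_le i m h x]

lemma tgt_dd_le (Y : OmegaCat) (α : Bool) {m i : ℕ} (h : m ≤ i) (x : Y.A) :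
    Y.tgt i (dd Y α m x) = dd Y α m x := by
  cases α <;> simp only [dd, if_true, if_false, Bool.false_eq_true] <;>
    [exact Y.tgt_src_le i m h x; exact Y.tgt_tgt_le i m h x]

lemma src_dd_lt (Y : OmegaCat) (α : Bool) {m i : ℕ} (h : i < m) (x : Y.A) :
    Y.src i (dd Y α m x) = Y.src i x := by
  cases α <;> simp only [dd, if_true, if_false, Bool.false_eq_true] <;>
    [exact Y.src_src_lt i m h x; exact Y.src_tgt_lt i m h x]

lemma tgt_dd_lt (Y : OmegaCat) (α : Bool) {m i : ℕ} (h : i < m) (x : Y.A) :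
    Y.tgt i (dd Y α m x) = Y.tgt i x := by
  cases α <;> simp only [dd, if_true, if_false, Bool.false_eq_true] <;>
    [exact Y.tgt_src_lt i m h x; exact Y.tgt_tgt_lt i m h x]

section Classify

variable (n : ℕ) (X : NCat) (u : trP X (n+1))

/-- The underlying map of the classifying ω-functor `G → X`
sending `(n+2, false)` to `u`. -/
def cf (x : ℕ × Bool) : X.C.A := dd X.C x.2 (min x.1 (n+2)) u.1

lemma hu_src : X.C.src (n+2) u.1 = u.1 := u.2.2.1

lemma hu_tgt : X.C.tgt (n+2) u.1 = u.1 := u.2.2.2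

lemma hu_dd (α : Bool) : dd X.C α (n+2) u.1 = u.1 := by
  cases α <;> simp only [dd, if_true, if_false, Bool.false_eq_true] <;>
    [exact hu_src n X u; exact hu_tgt n X u]

lemma hu_src_hi {i : ℕ} (h : n + 2 ≤ i) : X.C.src i u.1 = u.1 := by
  conv_lhs => rw [← hu_src n X u]
  rw [X.C.src_src_le i (n+2) h, hu_src n X u]

lemma hu_tgt_hi {i : ℕ} (h : n + 2 ≤ i) : X.C.tgt i u.1 = u.1 := by
  conv_lhs => rw [← hu_tgt n X u]
  rw [X.C.tgt_tgt_le i (n+2) h, hu_tgt n X u]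

lemma cf_src (i : ℕ) (x : ℕ × Bool) :
    cf n X u (G.src i x) = X.C.src i (cf n X u x) := by
  obtain ⟨k, α⟩ := x
  rw [G_src]
  unfold cf
  split_ifs with hk
  · dsimp only
    rw [src_dd_le X.C α (le_trans (min_le_left k (n+2)) hk)]
  · dsimp only
    rcases Nat.lt_or_ge i (min k (n+2)) with hlt | hge
    · rw [src_dd_lt X.C α hlt]
      have : min i (n+2) = i := by omega
      rw [this]
      simp only [dd, Bool.false_eq_true, if_false]
    · have h1 : min k (n+2) = n + 2 := by omega
      have h2 : min i (n+2) = n + 2 := by omega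
      have h3 : n + 2 ≤ i := by omega
      rw [h1, h2, hu_dd n X u α, hu_dd n X u false, hu_src_hi n X u h3]

lemma cf_tgt (i : ℕ) (x : ℕ × Bool) :
    cf n X u (G.tgt i x) = X.C.tgt i (cf n X u x) := by
  obtain ⟨k, α⟩ := x
  rw [G_tgt]
  unfold cf
  split_ifs with hk
  · dsimp only
    rw [tgt_dd_le X.C α (le_trans (min_le_left k (n+2)) hk)]
  · dsimp only
    rcases Nat.lt_or_ge i (min k (n+2)) with hlt | hge
    · rw [tgt_dd_lt X.C α hlt]
      have : min i (n+2) = i := by omega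
      rw [this]
      simp only [dd, if_true]
    · have h1 : min k (n+2) = n + 2 := by omega
      have h2 : min i (n+2) = n + 2 := by omega
      have h3 : n + 2 ≤ i := by omega
      rw [h1, h2, hu_dd n X u α, hu_dd n X u true, hu_tgt_hi n X u h3]

lemma cf_comp (j : ℕ) (x y : ℕ × Bool) (h : G.tgt j x = G.src j y) :
    cf n X u (G.comp j x y) = X.C.comp j (cf n X u x) (cf n X u y) := by
  show cf n X u (if y.1 ≤ j then x else y) = _
  split_ifs with hy
  · have hyx : G.tgt j x = y := by rw [h, G_src, if_pos hy]
    conv_rhs => rw [← hyx, cf_tgt]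
    rw [X.C.comp_tgt_unit]
  · have hx : x.1 ≤ j := by
      by_contra hx
      rw [G_tgt, if_neg hx, G_src, if_neg hy] at h
      have h : ((j, true) : ℕ × Bool) = (j, false) := h
      rw [Prod.ext_iff] at h
      simpa using h.2
    have hxy : G.src j y = x := by rw [← h, G_tgt, if_pos hx]
    conv_rhs => rw [← hxy, cf_src]
    rw [X.C.comp_src_unit]

lemma cf_nc (x : ℕ × Bool) (hx : G.OneDim x) :
    X.C.OneDim (cf n X u x) := by
  rw [G_oneDim] at hx
  obtain ⟨h1, h2⟩ := X.nc u.1 u.2.1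
  obtain ⟨k, α⟩ := x
  dsimp only at hx
  subst hx
  unfold cf
  have : min 1 (n+2) = 1 := by omega
  dsimp only
  rw [this]
  cases α <;> simp only [dd, if_true, if_false, Bool.false_eq_true] <;>
    [exact h1; exact h2]

/-- The classifying ω-functor `G → X` sending `(n+2, false)` to `u`. -/
def classify : NCFunctor G X.C :=
  ⟨cf n X u, cf_src n X u, cf_tgt n X u, cf_comp n X u, cf_nc n X u⟩

lemma classify_gen : (classify n X u).f (n+2, false) = u.1 := by
  show cf n X u (n+2, false) = u.1
  unfold cf
  simp only [dd, Bool.false_eq_true, if_false, min_self]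
  exact hu_src n X u

end Classify



end Stmt18Aux


/-- Any natural transformation `f : trⁿ⁺¹P → trⁿP` of functors on the category
of non-contracting ω-categories is of the form `dₚ^α` for some `p ≤ n` and
some sign `α` (here `dₚ^α` on the path ω-category is `s_{p+1}` resp. `t_{p+1}`
of the underlying ω-category): `f(u)` is uniformly one of
`s₀u, t₀u, …, s_{n-1}u?, …` — the iterated sources/targets of `u` — being
determined by its value on the generator of the free ω-category `2ₙ₊₂` on a
single morphism. -/
theorem stmt18 (n : ℕ)
    (f : ∀ X : NCat, trP X (n+1) → trP X n)
    (hnat : ∀ (X Y : NCat) (g : NCFunctor X.C Y.C) (u : trP X (n+1))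
        (v : trP Y (n+1)), v.1 = g.f u.1 → (f Y v).1 = g.f (f X u).1) :
    ∃ p : ℕ, p ≤ n ∧ ∃ α : Bool, ∀ (X : NCat) (u : trP X (n+1)),
      (f X u).1 = (if α then X.C.tgt (p+1) u.1 else X.C.src (p+1) u.1) := by
  have hpos : Stmt18Aux.G.PosDim ((n+2 : ℕ), false) := by
    rw [Stmt18Aux.G_posDim]; omega
  have hdim : Stmt18Aux.G.dimLE (n+1+1) ((n+2 : ℕ), false) := by
    rw [Stmt18Aux.G_dimLE]
  let u0 : trP Stmt18Aux.GN (n+1) := ⟨((n+2 : ℕ), false), hpos, hdim⟩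
  set w := f Stmt18Aux.GN u0 with hw
  obtain ⟨hw1, hw2⟩ := w.2
  have hq1 : 1 ≤ w.1.1 := by
    exact (Stmt18Aux.G_posDim _).mp hw1
  have hq2 : w.1.1 ≤ n + 1 := by
    exact (Stmt18Aux.G_dimLE _ _).mp hw2
  refine ⟨w.1.1 - 1, by omega, w.1.2, ?_⟩
  intro X u
  have hkey := hnat Stmt18Aux.GN X (Stmt18Aux.classify n X u) u0 u
    (Stmt18Aux.classify_gen n X u).symm
  rw [hkey, ← hw]
  show Stmt18Aux.cf n X u w.1 = _
  unfold Stmt18Aux.cf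
  have hmin : min w.1.1 (n+2) = w.1.1 := by omega
  have hp1 : w.1.1 - 1 + 1 = w.1.1 := by omega
  rw [hmin, hp1]
  rfl
end
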